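/- arXiv:1903.03520 — 4 statements merged into one kernel-verified Lean document; each statement's English description precedes it below -/
import Mathlib

section
/- Let x, y be strings over a metric space and let c(x), c(y) denote the strings obtained by collapsing every run in x and y to a single letter. Then dtw(c(x), c(y)) ≤ dtw(x, y). -/
/-!
Every string is an expansion of its destuttering, and an expansion of an expansion is an
expansion. Hence every correspondence between `x` and `y` is also a correspondence between
`c(x)` and `c(y)`, so the infimum defining `dtw (c x) (c y)` ranges over a larger set of costs.
-/

/-- `xb` is an expansion of `x`: each letter of `x` is duplicated in place a positive
number of times. -/
def IsExpansion {α : Type*} (x xb : List α) : Prop :=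
  ∃ ks : List ℕ, ks.length = x.length ∧ (∀ k ∈ ks, 0 < k) ∧
    xb = (List.zipWith (fun a k => List.replicate k a) x ks).flatten

/-- `(xb, yb)` is a correspondence between `x` and `y`: a pair of equal-length expansions. -/
def IsCorrespondence {α : Type*} (x y xb yb : List α) : Prop :=
  IsExpansion x xb ∧ IsExpansion y yb ∧ xb.length = yb.length

/-- The cost of a correspondence: summed distances of aligned letters. -/
noncomputable def corrCost {α : Type*} (δ : α → α → ℝ) (xb yb : List α) : ℝ :=
  (List.zipWith δ xb yb).sum

/-- Dynamic time warping distance with respect to a distance function `δ`. -/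
noncomputable def dtw {α : Type*} (δ : α → α → ℝ) (x y : List α) : ℝ :=
  sInf {c | ∃ xb yb, IsCorrespondence x y xb yb ∧ c = corrCost δ xb yb}

/-- Generalized Hamming distance on letters. -/
noncomputable def hamDist {α : Type*} [DecidableEq α] (a b : α) : ℝ := if a = b then 0 else 1

/-- DTW over generalized Hamming space. -/
noncomputable def dtw0 {α : Type*} [DecidableEq α] (x y : List α) : ℝ := dtw hamDist x y

section Expansion

variable {α : Type*}

open List

theorem isExpansion_nil_iff {xb : List α} : IsExpansion [] xb ↔ xb = [] := by
  constructor
  · rintro ⟨ks, hlen, -, rfl⟩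
    obtain rfl : ks = [] := length_eq_zero_iff.mp (by simpa using hlen)
    rfl
  · rintro rfl
    exact ⟨[], rfl, by simp, rfl⟩

theorem isExpansion_cons_iff {a : α} {x xb : List α} :
    IsExpansion (a :: x) xb ↔
      ∃ k, 0 < k ∧ ∃ xb', IsExpansion x xb' ∧ xb = replicate k a ++ xb' := by
  constructor
  · rintro ⟨_ | ⟨k, ks⟩, hlen, hpos, rfl⟩
    · simp at hlen
    · exact ⟨k, hpos k mem_cons_self, _,
        ⟨ks, by simpa using hlen, fun j hj => hpos j (mem_cons_of_mem k hj), rfl⟩, by simp⟩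
  · rintro ⟨k, hk, xb', ⟨ks, hlen, hpos, rfl⟩, rfl⟩
    refine ⟨k :: ks, by simp [hlen], ?_, by simp⟩
    simpa [hk] using hpos

theorem IsExpansion.eq_nil_iff {x xb : List α} (h : IsExpansion x xb) : x = [] ↔ xb = [] := by
  cases x with
  | nil => simpa using isExpansion_nil_iff.mp h
  | cons a x =>
    obtain ⟨k, hk, xb', -, rfl⟩ := isExpansion_cons_iff.mp h
    simp [hk.ne']

theorem IsExpansion.exists_append {u v z : List α} (h : IsExpansion (u ++ v) z) :
    ∃ zu zv, IsExpansion u zu ∧ IsExpansion v zv ∧ z = zu ++ zv := by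
  induction u generalizing z with
  | nil => exact ⟨[], z, isExpansion_nil_iff.mpr rfl, h, rfl⟩
  | cons a u ih =>
    obtain ⟨k, hk, z', hz', rfl⟩ := isExpansion_cons_iff.mp h
    obtain ⟨zu, zv, hzu, hzv, rfl⟩ := ih hz'
    exact ⟨replicate k a ++ zu, zv, isExpansion_cons_iff.mpr ⟨k, hk, zu, hzu, rfl⟩, hzv,
      (append_assoc _ _ _).symm⟩

theorem IsExpansion.exists_eq_replicate {k : ℕ} {a : α} {z : List α} (hk : 0 < k)
    (h : IsExpansion (replicate k a) z) : ∃ m, 0 < m ∧ z = replicate m a := by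
  induction k generalizing z with
  | zero => omega
  | succ k ih =>
    rw [replicate_succ, isExpansion_cons_iff] at h
    obtain ⟨m, hm, z', hz', rfl⟩ := h
    rcases Nat.eq_zero_or_pos k with rfl | hk'
    · exact ⟨m, hm, by simp [isExpansion_nil_iff.mp hz']⟩
    · obtain ⟨m', -, rfl⟩ := ih hk' hz'
      exact ⟨m + m', by omega, (replicate_add m m' a).symm⟩

theorem IsExpansion.trans {x y z : List α} (hxy : IsExpansion x y) (hyz : IsExpansion y z) :
    IsExpansion x z := by
  induction x generalizing y z with
  | nil => rwa [isExpansion_nil_iff.mp hxy] at hyz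
  | cons a x ih =>
    obtain ⟨k, hk, y', hy', rfl⟩ := isExpansion_cons_iff.mp hxy
    obtain ⟨zu, zv, hzu, hzv, rfl⟩ := hyz.exists_append
    obtain ⟨m, hm, rfl⟩ := hzu.exists_eq_replicate hk
    exact isExpansion_cons_iff.mpr ⟨m, hm, zv, ih hy' hzv, rfl⟩

theorem IsExpansion.dup_head {w l : List α} {a : α} (h : IsExpansion w (a :: l)) :
    IsExpansion w (a :: a :: l) := by
  cases w with
  | nil => simp [isExpansion_nil_iff] at h
  | cons c w =>
    obtain ⟨_ | k, hk, z, hz, heq⟩ := isExpansion_cons_iff.mp h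
    · omega
    · rw [replicate_succ, cons_append, cons_eq_cons] at heq
      obtain ⟨rfl, hl⟩ := heq
      exact isExpansion_cons_iff.mpr ⟨k + 2, by omega, z, hz, by simp [hl, replicate_succ]⟩

theorem isExpansion_destutter' [DecidableEq α] (a : α) (l : List α) :
    IsExpansion (l.destutter' (· ≠ ·) a) (a :: l) := by
  induction l generalizing a with
  | nil => exact isExpansion_cons_iff.mpr ⟨1, one_pos, [], isExpansion_nil_iff.mpr rfl, rfl⟩
  | cons b l ih =>
    by_cases hab : a = b
    · subst hab
      simpa using (ih a).dup_head
    · rw [destutter'_cons_pos l hab]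
      exact isExpansion_cons_iff.mpr ⟨1, one_pos, b :: l, ih b, rfl⟩

theorem isExpansion_destutter [DecidableEq α] (x : List α) :
    IsExpansion (x.destutter (· ≠ ·)) x := by
  cases x with
  | nil => exact isExpansion_nil_iff.mpr rfl
  | cons a l => exact isExpansion_destutter' a l

theorem exists_isExpansion_length_eq_mul (x : List α) {n : ℕ} (hn : 0 < n) :
    ∃ xb, IsExpansion x xb ∧ xb.length = x.length * n := by
  induction x with
  | nil => exact ⟨[], isExpansion_nil_iff.mpr rfl, by simp⟩
  | cons a x ih =>
    obtain ⟨xb, hxb, hlen⟩ := ih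
    refine ⟨replicate n a ++ xb, isExpansion_cons_iff.mpr ⟨n, hn, xb, hxb, rfl⟩, ?_⟩
    simp [hlen, Nat.succ_mul, Nat.add_comm]

end Expansion

section DTW

variable {α : Type*} {δ : α → α → ℝ} {x y x' y' : List α}

theorem exists_isCorrespondence_iff :
    (∃ xb yb, IsCorrespondence x y xb yb) ↔ (x = [] ↔ y = []) := by
  constructor
  · rintro ⟨xb, yb, hx, hy, hlen⟩
    rw [hx.eq_nil_iff, hy.eq_nil_iff, ← List.length_eq_zero_iff, hlen, List.length_eq_zero_iff]
  · intro h
    by_cases hx : x = []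
    · subst hx
      obtain rfl := h.mp rfl
      exact ⟨[], [], isExpansion_nil_iff.mpr rfl, isExpansion_nil_iff.mpr rfl, rfl⟩
    · have hy : y ≠ [] := mt h.mpr hx
      obtain ⟨xb, hxb, hxl⟩ := exists_isExpansion_length_eq_mul x (List.length_pos_iff.mpr hy)
      obtain ⟨yb, hyb, hyl⟩ := exists_isExpansion_length_eq_mul y (List.length_pos_iff.mpr hx)
      exact ⟨xb, yb, hxb, hyb, by rw [hxl, hyl, Nat.mul_comm]⟩

theorem dtw_eq_zero_of_not_iff (h : ¬(x = [] ↔ y = [])) : dtw δ x y = 0 := by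
  rw [dtw, ← Real.sInf_empty]
  congr 1
  refine Set.eq_empty_of_forall_notMem ?_
  rintro c ⟨xb, yb, hc, -⟩
  exact h (exists_isCorrespondence_iff.mp ⟨xb, yb, hc⟩)

theorem corrCost_nonneg (hδ : ∀ a b, 0 ≤ δ a b) (xb yb : List α) : 0 ≤ corrCost δ xb yb := by
  refine List.sum_nonneg fun c hc => ?_
  obtain ⟨i, hi, rfl⟩ := List.mem_iff_getElem.mp hc
  simpa using hδ _ _

theorem dtw_le_dtw_of_isExpansion (hδ : ∀ a b, 0 ≤ δ a b) (hx : IsExpansion x' x)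
    (hy : IsExpansion y' y) : dtw δ x' y' ≤ dtw δ x y := by
  by_cases h : x = [] ↔ y = []
  · obtain ⟨xb, yb, hc⟩ := exists_isCorrespondence_iff.mpr h
    refine csInf_le_csInf ⟨0, ?_⟩ ⟨_, xb, yb, hc, rfl⟩ ?_
    · rintro c ⟨xb, yb, -, rfl⟩
      exact corrCost_nonneg hδ xb yb
    · rintro c ⟨xb, yb, ⟨hxb, hyb, hlen⟩, rfl⟩
      exact ⟨xb, yb, ⟨hx.trans hxb, hy.trans hyb, hlen⟩, rfl⟩
  · have h' : ¬(x' = [] ↔ y' = []) := by rwa [hx.eq_nil_iff, hy.eq_nil_iff]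
    rw [dtw_eq_zero_of_not_iff h, dtw_eq_zero_of_not_iff h']

end DTW

/-- Collapsing each run to a single letter does not increase DTW. -/
theorem dtw_destutter_le {α : Type*} [MetricSpace α] [DecidableEq α] (x y : List α) :
    dtw dist (x.destutter (· ≠ ·)) (y.destutter (· ≠ ·)) ≤ dtw dist x y :=
  dtw_le_dtw_of_isExpansion (fun _ _ => dist_nonneg) (isExpansion_destutter x)
    (isExpansion_destutter y)
end

section
/- Let T be a well-separated tree metric on alphabet Σ (distance between two nodes is the maximum edge weight on the tree path between them, with weights non-increasing along root-to-leaf paths), and let s_r map each letter to its highest ancestor reachable via edges of weight at most r/4. Then for any two letters l₁, l₂ with s_r(l₁) ≠ s_r(l₂), we have d(s_r(l₁), s_r(l₂)) > r/4. -/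
/-- A well-separated tree metric: a rooted tree on Σ with positive edge weights
(`w v` is the weight of the edge from `v` to its parent) that are non-increasing
along root-to-leaf paths. -/
structure WSTree (σ : Type*) where
  root : σ
  par : σ → σ
  w : σ → ℝ
  depth : σ → ℕ
  depth_root : depth root = 0
  root_of_depth : ∀ v, depth v = 0 → v = root
  par_root : par root = root
  depth_par : ∀ v, v ≠ root → depth (par v) + 1 = depth v
  w_pos : ∀ v, v ≠ root → 0 < w v
  w_mono : ∀ v, v ≠ root → par v ≠ root → w v ≤ w (par v)

/-- The k-th iterated ancestor of v. -/
def WSTree.anc {σ : Type*} (T : WSTree σ) (v : σ) : ℕ → σ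
  | 0 => v
  | k + 1 => T.par (T.anc v k)

/-- The maximum weight among the first k edges on the path from v towards the root. -/
noncomputable def WSTree.upMax {σ : Type*} (T : WSTree σ) (v : σ) : ℕ → ℝ
  | 0 => 0
  | k + 1 => max (T.upMax v k) (T.w (T.anc v k))

/-- The well-separated tree metric distance: the maximum edge weight on the tree path
between u and v (minimized over common ancestors through which the path may pass). -/
noncomputable def WSTree.tdist {σ : Type*} (T : WSTree σ) (u v : σ) : ℝ :=
  sInf {c | ∃ j k, T.anc u j = T.anc v k ∧ c = max (T.upMax u j) (T.upMax v k)}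

/-- The number of steps up from v to its highest ancestor reachable via edges of
weight at most r/4. -/
noncomputable def WSTree.srIdx {σ : Type*} (T : WSTree σ) (r : ℝ) (v : σ) : ℕ :=
  sSup {k | k ≤ T.depth v ∧ ∀ i < k, T.w (T.anc v i) ≤ r / 4}

/-- The r-simplification on letters: the highest ancestor of v reachable from v via
edges of weight at most r/4. -/
noncomputable def WSTree.sr {σ : Type*} (T : WSTree σ) (r : ℝ) (v : σ) : σ :=
  T.anc v (T.srIdx r v)

/-!
By maximality of the climb defining `s_r`, the parent edge of a simplified letter other than the
root weighs more than `r/4`. A path between two distinct simplified letters must leave one of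
them, necessarily a non-root one, through its parent edge, so its maximal weight exceeds `r/4`.
-/

namespace WSTree

variable {σ : Type*} (T : WSTree σ)

theorem anc_eq_iterate (v : σ) (k : ℕ) : T.anc v k = T.par^[k] v := by
  induction k with
  | zero => rfl
  | succ k ih => rw [Function.iterate_succ_apply', ← ih]; rfl

theorem anc_root (k : ℕ) : T.anc T.root k = T.root := by
  rw [anc_eq_iterate]
  exact Function.iterate_fixed T.par_root k

theorem anc_depth (v : σ) : T.anc v (T.depth v) = T.root := by
  generalize hd : T.depth v = n
  induction n generalizing v with
  | zero => exact T.root_of_depth v hd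
  | succ n ih =>
    by_cases hv : v = T.root
    · subst hv; exact T.anc_root _
    · have hpar : T.depth (T.par v) = n := by have := T.depth_par v hv; omega
      rw [anc_eq_iterate, Function.iterate_succ_apply, ← anc_eq_iterate, ih _ hpar]

theorem depth_anc_add (v : σ) (m : ℕ) (h : T.anc v m ≠ T.root) :
    T.depth (T.anc v m) + m = T.depth v := by
  induction m with
  | zero => rfl
  | succ m ih =>
    have hm : T.anc v m ≠ T.root := fun he => h (by simp only [anc, he, T.par_root])
    have := T.depth_par _ hm
    have := ih hm
    simp only [anc]
    omega

theorem monotone_upMax (v : σ) : Monotone (T.upMax v) :=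
  monotone_nat_of_le_succ fun _ => le_max_left _ _

theorem w_anc_le_upMax (v : σ) {i k : ℕ} (h : i < k) : T.w (T.anc v i) ≤ T.upMax v k :=
  (le_max_right _ _).trans (T.monotone_upMax v h)

def srSteps (r : ℝ) (v : σ) : Set ℕ :=
  {k | k ≤ T.depth v ∧ ∀ i < k, T.w (T.anc v i) ≤ r / 4}

theorem bddAbove_srSteps (r : ℝ) (v : σ) : BddAbove (T.srSteps r v) :=
  ⟨T.depth v, fun _ hk => hk.1⟩

theorem srIdx_mem_srSteps (r : ℝ) (v : σ) : T.srIdx r v ∈ T.srSteps r v :=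
  Nat.sSup_mem ⟨0, by simp [srSteps]⟩ (T.bddAbove_srSteps r v)

theorem lt_w_sr (r : ℝ) (v : σ) (h : T.sr r v ≠ T.root) : r / 4 < T.w (T.sr r v) := by
  by_contra! hle
  obtain ⟨-, hsteps⟩ := T.srIdx_mem_srSteps r v
  have hroom : T.srIdx r v < T.depth v := by
    have hpos : T.depth (T.sr r v) ≠ 0 := fun h0 => h (T.root_of_depth _ h0)
    have := T.depth_anc_add v _ h
    unfold sr at hpos
    omega
  have hsucc : T.srIdx r v + 1 ∈ T.srSteps r v := by
    refine ⟨hroom, fun i hi => ?_⟩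
    rcases Nat.lt_succ_iff_lt_or_eq.mp hi with hi | rfl
    · exact hsteps i hi
    · exact hle
  exact (le_csSup (T.bddAbove_srSteps r v) hsucc).not_gt (Nat.lt_succ_self (T.srIdx r v))

theorem exists_step_of_anc_eq {u v : σ} (huv : u ≠ v) {j k : ℕ} (h : T.anc u j = T.anc v k) :
    (u ≠ T.root ∧ 0 < j) ∨ (v ≠ T.root ∧ 0 < k) := by
  rcases Nat.eq_zero_or_pos j with rfl | hj
  · rcases Nat.eq_zero_or_pos k with rfl | hk
    · exact absurd h huv
    · refine .inr ⟨fun hv => huv ?_, hk⟩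
      rw [hv, anc_root] at h
      exact h.trans hv.symm
  · by_cases hu : u = T.root
    · refine .inr ⟨fun hv => huv (hu.trans hv.symm), ?_⟩
      rw [hu, anc_root] at h
      exact Nat.pos_of_ne_zero fun hk => huv (by simp_all [anc])
    · exact .inl ⟨hu, hj⟩

theorem lt_tdist {u v : σ} (huv : u ≠ v) {b : ℝ} (hu : u ≠ T.root → b < T.w u)
    (hv : v ≠ T.root → b < T.w v) : b < T.tdist u v := by
  obtain ⟨m, hbm, hmu, hmv⟩ :
      ∃ m, b < m ∧ (u ≠ T.root → m ≤ T.w u) ∧ (v ≠ T.root → m ≤ T.w v) := by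
    by_cases hur : u = T.root
    · have hvr : v ≠ T.root := fun hvr => huv (hur.trans hvr.symm)
      exact ⟨T.w v, hv hvr, fun h => absurd hur h, fun _ => le_rfl⟩
    by_cases hvr : v = T.root
    · exact ⟨T.w u, hu hur, fun _ => le_rfl, fun h => absurd hvr h⟩
    exact ⟨min (T.w u) (T.w v), lt_min (hu hur) (hv hvr), fun _ => min_le_left _ _,
      fun _ => min_le_right _ _⟩
  refine hbm.trans_le (le_csInf ⟨_, T.depth u, T.depth v, by rw [anc_depth, anc_depth], rfl⟩ ?_)
  rintro c ⟨j, k, hjk, rfl⟩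
  rcases T.exists_step_of_anc_eq huv hjk with ⟨hur, hj⟩ | ⟨hvr, hk⟩
  · exact le_max_of_le_left ((hmu hur).trans (T.w_anc_le_upMax u hj))
  · exact le_max_of_le_right ((hmv hvr).trans (T.w_anc_le_upMax v hk))

end WSTree

theorem tdist_sr_gt_general {σ : Type*} (T : WSTree σ) (r : ℝ) (l1 l2 : σ)
    (h : T.sr r l1 ≠ T.sr r l2) :
    r / 4 < T.tdist (T.sr r l1) (T.sr r l2) :=
  T.lt_tdist h (T.lt_w_sr r l1) (T.lt_w_sr r l2)

/-- Distinct r-simplified letters are at distance greater than r/4. -/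
theorem tdist_sr_gt {σ : Type*} (T : WSTree σ) (r : ℝ) (hr : 1 ≤ r) (l1 l2 : σ)
    (h : T.sr r l1 ≠ T.sr r l2) :
    r / 4 < T.tdist (T.sr r l1) (T.sr r l2) :=
  tdist_sr_gt_general T r l1 l2 h
end

section
/- Let Σ = {0,1,…,m} with the metric d(a,b) = |a−b|, let α ≥ m ≥ 2, let k be a positive integer, and for a letter c ∈ {1,…,m−1} define Z(c) = 0^α ∘ (1,2,…,c−1) ∘ c^α ∘ (c+1,…,m−1) ∘ m^α. For x ∈ {1,…,m−1}^k let A(x) = Z(x₁)∘⋯∘Z(x_k); let [0,m] denote the string (0,1,…,m) and Y(y) = (0,1,…,y−1, y+1,…,m), and let B(i) = [0,m]^{i−1} ∘ Y(y_i) ∘ [0,m]^{k−i}. If x_i ≠ y_i, then dtw(A(x), B(i)) ≤ 1. -/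
/-- Z(c) = 0^α ∘ (1,…,c−1) ∘ c^α ∘ (c+1,…,m−1) ∘ m^α, for a letter 1 ≤ c ≤ m−1. -/
def Zint (m a : ℕ) (c : ℤ) : List ℤ :=
  List.replicate a 0 ++ ((List.range (c - 1).toNat).map fun t => (t : ℤ) + 1) ++
    List.replicate a c ++ ((List.range (m - 1 - c.toNat)).map fun t => c + 1 + (t : ℤ)) ++
    List.replicate a (m : ℤ)

/-- A(x) = Z(x₁) ∘ ⋯ ∘ Z(x_k). -/
def Aint (m a k : ℕ) (x : Fin k → ℤ) : List ℤ :=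
  (List.ofFn fun j => Zint m a (x j)).flatten

/-- The full block [0, m] = (0, 1, …, m). -/
def fullBlock (m : ℕ) : List ℤ :=
  (List.range (m + 1)).map fun t => (t : ℤ)

/-- Y(y) = (0, 1, …, y−1, y+1, …, m). -/
def Yint (m : ℕ) (y : ℤ) : List ℤ :=
  ((List.range (m + 1)).map fun t => (t : ℤ)).filter (fun t => t != y)

/-- B(i) = [0,m]^{i−1} ∘ Y(y_i) ∘ [0,m]^{k−i} (i zero-indexed here). -/
def Bint (m k : ℕ) (i : Fin k) (yv : ℤ) : List ℤ :=
  (List.replicate (i : ℕ) (fullBlock m)).flatten ++ Yint m yv ++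
    (List.replicate (k - 1 - (i : ℕ)) (fullBlock m)).flatten

/-!
Each full block `[0, m]` expands to `Z(c)` by repeating `0`, `c` and `m` exactly `a` times, so
expanding every block `j ≠ i` of `B(i)` to `Z(x_j)` matches `A(x)` there at cost `0`. In block `i`,
the letter `y = y_i ≠ x_i` occurs once in `Z(x_i)`, and `Y(y)` is the full block without `y`:
repeating `y + 1` once more expands `Y(y)` to `Z(x_i)` with this single `y` replaced by `y + 1`,
at cost `|y - (y + 1)| = 1`.
-/

open List

section Expansion

variable {α : Type*}

lemma IsExpansion.refl (l : List α) : IsExpansion l l := by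
  refine ⟨replicate l.length 1, by simp, by simp [mem_replicate], ?_⟩
  induction l with
  | nil => rfl
  | cons a l ih => simp [replicate_succ, ← ih]

lemma IsExpansion.append {x y xb yb : List α} (hx : IsExpansion x xb) (hy : IsExpansion y yb) :
    IsExpansion (x ++ y) (xb ++ yb) := by
  obtain ⟨ks, hl, hpos, rfl⟩ := hx
  obtain ⟨ks', hl', hpos', rfl⟩ := hy
  refine ⟨ks ++ ks', by simp [hl, hl'], ?_, by rw [zipWith_append hl.symm, flatten_append]⟩
  simpa only [mem_append, or_imp, forall_and] using ⟨hpos, hpos'⟩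

lemma IsExpansion.cons_replicate {l L : List α} {n : ℕ} (t : α) (hn : 0 < n)
    (h : IsExpansion l L) : IsExpansion (t :: l) (replicate n t ++ L) := by
  obtain ⟨ks, hl, hpos, rfl⟩ := h
  exact ⟨n :: ks, by simp [hl], by simpa [hn] using hpos, by simp⟩

lemma IsExpansion.flatten_replicate {u : List α} {L : List (List α)}
    (h : ∀ l ∈ L, IsExpansion u l) : IsExpansion (replicate L.length u).flatten L.flatten := by
  induction L with
  | nil => exact IsExpansion.refl []
  | cons l L ih =>
    simp only [forall_mem_cons] at h
    simpa [replicate_succ] using h.1.append (ih h.2)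

def stretch (w : α → ℕ) (l : List α) : List α :=
  l.flatMap fun t => replicate (w t) t

variable {w : α → ℕ}

@[simp]
lemma stretch_nil : stretch w [] = [] := rfl

@[simp]
lemma stretch_cons (t : α) (l : List α) :
    stretch w (t :: l) = replicate (w t) t ++ stretch w l := flatMap_cons

@[simp]
lemma stretch_append (l₁ l₂ : List α) :
    stretch w (l₁ ++ l₂) = stretch w l₁ ++ stretch w l₂ := flatMap_append

lemma stretch_eq_self {l : List α} (h : ∀ t ∈ l, w t = 1) : stretch w l = l := by
  induction l with
  | nil => rfl
  | cons t l ih =>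
    simp only [forall_mem_cons] at h
    simp [h.1, ih h.2]

lemma isExpansion_stretch {l : List α} (h : ∀ t ∈ l, 0 < w t) : IsExpansion l (stretch w l) := by
  induction l with
  | nil => exact IsExpansion.refl []
  | cons t l ih =>
    simp only [forall_mem_cons] at h
    exact (ih h.2).cons_replicate t h.1

/-- The single copy of `u` is absorbed into the run of `v`. -/
lemma exists_stretch_eq_isExpansion_skip {l₁ l₂ : List α} {u v : α} (hu : w u = 1)
    (hw : ∀ t ∈ l₁ ++ v :: l₂, 0 < w t) :
    ∃ P S, stretch w (l₁ ++ u :: v :: l₂) = P ++ u :: S ∧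
      IsExpansion (l₁ ++ v :: l₂) (P ++ v :: S) := by
  simp only [mem_append, mem_cons, or_imp, forall_and, forall_eq] at hw
  refine ⟨stretch w l₁, replicate (w v) v ++ stretch w l₂, by simp [hu], ?_⟩
  rw [← cons_append, ← replicate_succ]
  exact (isExpansion_stretch hw.1).append
    ((isExpansion_stretch hw.2.2).cons_replicate v (Nat.succ_pos _))

end Expansion

section Cost

variable {α : Type*} {δ : α → α → ℝ}

lemma dtw_le_corrCost (hδ : ∀ a b, 0 ≤ δ a b) {x y xb yb : List α}
    (h : IsCorrespondence x y xb yb) : dtw δ x y ≤ corrCost δ xb yb := by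
  refine csInf_le ⟨0, ?_⟩ ⟨xb, yb, h, rfl⟩
  rintro _ ⟨xb', yb', -, rfl⟩
  exact sum_nonneg fun c hc => by
    obtain ⟨i, -, rfl⟩ := mem_iff_getElem.1 hc
    simp only [getElem_zipWith, hδ]

lemma corrCost_append_cons (hδ : ∀ a, δ a a = 0) (l r : List α) (u v : α) :
    corrCost δ (l ++ u :: r) (l ++ v :: r) = δ u v := by
  simp [corrCost, zipWith_append, hδ]

end Cost

section Blocks

def zWeight (m a : ℕ) (c t : ℤ) : ℕ := if t = 0 ∨ t = c ∨ t = m then a else 1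

variable {m n a : ℕ}

lemma fullBlock_eq_map_range' (m : ℕ) : fullBlock m = (range' 0 (m + 1)).map (↑) := by
  simp [fullBlock, range_eq_range', map_eq_flatMap]

lemma fullBlock_eq_split (h1 : 1 ≤ n) (h2 : n < m) :
    fullBlock m = [0] ++ (range' 1 (n - 1)).map (↑) ++ [(n : ℤ)] ++
      (range' (n + 1) (m - 1 - n)).map (↑) ++ [(m : ℤ)] := by
  rw [fullBlock_eq_map_range', show m + 1 = 1 + (n - 1) + 1 + (m - 1 - n) + 1 by omega]
  simp only [← range'_append_1, range'_one, map_append, map_cons, map_nil]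
  rw [show 0 + (1 + (n - 1)) = n by omega, show 0 + (1 + (n - 1) + 1) = n + 1 by omega,
    show 0 + (1 + (n - 1) + 1 + (m - 1 - n)) = m by omega]
  rfl

lemma fullBlock_eq_append_cons_cons (h : n < m) :
    fullBlock m = (range' 0 n).map (↑) ++ (n : ℤ) :: (n + 1 : ℤ) ::
      (range' (n + 2) (m - 1 - n)).map (↑) := by
  rw [fullBlock_eq_map_range', show m + 1 = n + (m - 1 - n + 1 + 1) by omega, ← range'_append_1,
    range'_succ, range'_succ]
  simp

lemma Yint_eq_append_cons (h : n < m) :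
    Yint m n = (range' 0 n).map (↑) ++ (n + 1 : ℤ) :: (range' (n + 2) (m - 1 - n)).map (↑) := by
  rw [Yint, ← fullBlock, fullBlock_eq_append_cons_cons h]
  simp only [filter_append, filter_cons, bne_iff_ne, ne_eq, add_eq_left, one_ne_zero,
    not_false_eq_true, bne_self_eq_false, Bool.false_eq_true, if_false, if_true]
  rw [filter_eq_self.2, filter_eq_self.2] <;>
    simp only [mem_map, mem_range'_1, bne_iff_ne, ne_eq, forall_exists_index, and_imp] <;> omega

lemma Zint_natCast (m a n : ℕ) :
    Zint m a n = replicate a 0 ++ (range' 1 (n - 1)).map (↑) ++ replicate a (n : ℤ) ++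
      (range' (n + 1) (m - 1 - n)).map (↑) ++ replicate a (m : ℤ) := by
  simp [Zint, ← map_eq_flatMap, range'_eq_map_range, Function.comp_def, add_comm]

lemma Zint_eq_stretch (h1 : 1 ≤ n) (h2 : n < m) :
    Zint m a n = stretch (zWeight m a n) (fullBlock m) := by
  rw [Zint_natCast, fullBlock_eq_split h1 h2]
  simp only [stretch_append, stretch_cons, stretch_nil, append_nil]
  rw [stretch_eq_self, stretch_eq_self]
  · simp [zWeight]
  all_goals
    intro x hx
    obtain ⟨s, hs, rfl⟩ := mem_map.1 hx
    rw [mem_range'_1] at hs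
    simp only [zWeight]
    split_ifs <;> omega

lemma isExpansion_fullBlock_Zint (ha : 0 < a) {c : ℤ} (hc : 1 ≤ c ∧ c ≤ (m : ℤ) - 1) :
    IsExpansion (fullBlock m) (Zint m a c) := by
  lift c to ℕ using by omega
  rw [Zint_eq_stretch (by omega) (by omega)]
  exact isExpansion_stretch fun t _ => by unfold zWeight; split_ifs <;> omega

lemma exists_Zint_eq_isExpansion_Yint (ha : 0 < a) {c y : ℤ} (hc : 1 ≤ c ∧ c ≤ (m : ℤ) - 1)
    (hy : 1 ≤ y ∧ y ≤ (m : ℤ) - 1) (hne : c ≠ y) :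
    ∃ P S, Zint m a c = P ++ y :: S ∧ IsExpansion (Yint m y) (P ++ (y + 1) :: S) := by
  lift c to ℕ using by omega
  lift y to ℕ using by omega
  rw [Zint_eq_stretch (by omega) (by omega), fullBlock_eq_append_cons_cons (n := y) (by omega),
    Yint_eq_append_cons (by omega)]
  refine exists_stretch_eq_isExpansion_skip ?_ fun t _ => ?_
  · unfold zWeight; split_ifs <;> omega
  · unfold zWeight; split_ifs <;> omega

end Blocks

theorem dtw_int_index_ne_general (m a k : ℕ) (hma : m ≤ a)
    (x : Fin k → ℤ) (hx : ∀ j, 1 ≤ x j ∧ x j ≤ (m : ℤ) - 1)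
    (i : Fin k) (yv : ℤ) (hyv : 1 ≤ yv ∧ yv ≤ (m : ℤ) - 1)
    (h : x i ≠ yv) :
    dtw dist (Aint m a k x) (Bint m k i yv) ≤ 1 := by
  have ha : 0 < a := by omega
  set L := List.ofFn fun j => Zint m a (x j)
  obtain ⟨P, S, hZ, hY⟩ := exists_Zint_eq_isExpansion_Yint ha (hx i) hyv h
  have hA : Aint m a k x = (L.take i).flatten ++ (P ++ yv :: S) ++ (L.drop (i + 1)).flatten := by
    rw [← hZ, show Aint m a k x = L.flatten from rfl]
    conv_lhs => rw [← take_append_drop i L, drop_eq_getElem_cons (by simp [L])]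
    simp [L]
  have hfull : ∀ l ∈ L, IsExpansion (fullBlock m) l := by
    simpa [L, mem_ofFn] using fun j => isExpansion_fullBlock_Zint ha (hx j)
  have hB : IsExpansion (Bint m k i yv)
      ((L.take i).flatten ++ (P ++ (yv + 1) :: S) ++ (L.drop (i + 1)).flatten) := by
    have hpre := IsExpansion.flatten_replicate fun l (hl : l ∈ L.take i) =>
      hfull l (mem_of_mem_take hl)
    have hsuf := IsExpansion.flatten_replicate fun l (hl : l ∈ L.drop (i + 1)) =>
      hfull l (mem_of_mem_drop hl)
    simpa [Bint, L, Nat.sub_sub, Nat.add_comm 1] using (hpre.append hY).append hsuf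
  calc dtw dist (Aint m a k x) (Bint m k i yv)
      ≤ corrCost dist (Aint m a k x)
          ((L.take i).flatten ++ (P ++ (yv + 1) :: S) ++ (L.drop (i + 1)).flatten) :=
        dtw_le_corrCost (fun _ _ => dist_nonneg) ⟨IsExpansion.refl _, hB, by simp [hA]⟩
    _ = dist yv (yv + 1) := by
        rw [hA]
        simpa using corrCost_append_cons dist_self ((L.take i).flatten ++ P)
          (S ++ (L.drop (i + 1)).flatten) yv (yv + 1)
    _ = 1 := by simp

/-- If x_i ≠ y_i then dtw(A(x), B(i)) ≤ 1. -/
theorem dtw_int_index_ne (m a k : ℕ) (hm : 2 ≤ m) (hma : m ≤ a) (hk : 0 < k)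
    (x : Fin k → ℤ) (hx : ∀ j, 1 ≤ x j ∧ x j ≤ (m : ℤ) - 1)
    (i : Fin k) (yv : ℤ) (hyv : 1 ≤ yv ∧ yv ≤ (m : ℤ) - 1)
    (h : x i ≠ yv) :
    dtw dist (Aint m a k x) (Bint m k i yv) ≤ 1 :=
  dtw_int_index_ne_general m a k hma x hx i yv hyv h
end

section
/- Let Σ = {0,1,…,m} with d(a,b) = |a−b|, let α ≥ m ≥ 2, let k be a positive integer, and for c ∈ {1,…,m−1} define Z(c) = 0^α ∘ (1,2,…,c−1) ∘ c^α ∘ (c+1,…,m−1) ∘ m^α. For x ∈ {1,…,m−1}^k let A(x) = Z(x₁)∘⋯∘Z(x_k); let [0,m] = (0,1,…,m), Y(y) = (0,1,…,y−1, y+1,…,m), and B(i) = [0,m]^{i−1} ∘ Y(y_i) ∘ [0,m]^{k−i}. If x_i = y_i, then dtw(A(x), B(i)) ≥ α. -/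
/-!
Suppose `dtw(A(x), B(i)) < α` and fix a correspondence of cost `< α`. Distinct integers are at
distance at least `1`, so each of the `3k` runs `0^α`, `x_j^α`, `m^α` of `A(x)` must have a letter
aligned with an equal letter of `B(i)`: otherwise that run alone costs `α`. Consecutive runs carry
distinct letters, hence these aligned letters of `B(i)` occur in strictly increasing positions, and
`(0, x₁, m, 0, x₂, m, …, 0, x_k, m)` is a subsequence of `B(i)`. This is impossible: an increasing
subsequence of a block `[0, m]` ends once it reaches `m`, so every triple `(0, x_j, m)` needs a
block of its own; since `Y(y_i)` lacks `y_i = x_i`, the `i`-th triple needs two, so the `k` triples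
would need `k + 1` of the `k` blocks of `B(i)`.
-/

open List

namespace List

variable {α : Type*}

theorem getElem?_flatMap_replicate (l : List α) (a : ℕ) {j u : ℕ} (hu : u < a) :
    (l.flatMap (replicate a))[j * a + u]? = l[j]? := by
  induction l generalizing j with
  | nil => simp
  | cons c l ih =>
    rcases j with _ | j
    · rw [flatMap_cons, zero_mul, zero_add, getElem?_append_left (by simpa using hu)]
      simp [hu]
    · rw [flatMap_cons, show (j + 1) * a + u = a + (j * a + u) by ring,
        getElem?_append_right (by simp), length_replicate, Nat.add_sub_cancel_left, ih]
      simp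

theorem sum_eq_sum_range_getD {M : Type*} [AddCommMonoid M] (l : List M) :
    l.sum = ∑ t ∈ Finset.range l.length, l.getD t 0 := by
  rw [Finset.sum_range, ← Fin.sum_univ_getElem]
  simp

theorem cons_sublist_of_append_cons_sublist_append {u r l₁ l₂ : List α} {y : α} (hy : y ∉ l₁)
    (h : u ++ y :: r <+ l₁ ++ l₂) : y :: r <+ l₂ := by
  obtain ⟨p, q, he, hp, hq⟩ := sublist_append_iff.mp h
  rcases append_eq_append_iff.mp he with ⟨_ | ⟨z, s⟩, rfl, hq'⟩ | ⟨s, rfl, rfl⟩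
  · rw [nil_append] at hq'
    exact hq' ▸ hq
  · obtain ⟨rfl, -⟩ := cons_eq_cons.mp hq'
    exact absurd (hp.subset (by simp)) hy
  · exact (sublist_append_right s _).trans hq

theorem sublist_of_append_cons_sublist_append [LinearOrder α] {u r l₁ l₂ : List α} {y : α}
    (hl₁ : l₁.Pairwise (· < ·)) (hy : ∀ z ∈ l₁, z ≤ y) (h : u ++ y :: r <+ l₁ ++ l₂) :
    r <+ l₂ := by
  obtain ⟨p, q, he, hp, hq⟩ := sublist_append_iff.mp h
  rcases append_eq_append_iff.mp he with ⟨_ | ⟨z, s⟩, rfl, hq'⟩ | ⟨s, rfl, rfl⟩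
  · rw [nil_append] at hq'
    exact (sublist_cons_self _ _).trans (hq' ▸ hq)
  · obtain ⟨rfl, rfl⟩ := cons_eq_cons.mp hq'
    rcases s with _ | ⟨w, s⟩
    · simpa using hq
    · have hpw := hl₁.sublist hp
      simp only [pairwise_append, pairwise_cons] at hpw
      exact absurd (hy w (hp.subset (by simp))) (not_le.mpr (hpw.2.1.1 w (by simp)))
  · exact ((sublist_cons_self _ _).trans (sublist_append_right s _)).trans hq

end List

section DTW

variable {α : Type*}

theorem IsExpansion.exists_monotone_index {x xb : List α} (h : IsExpansion x xb) :
    ∃ f : ℕ → ℕ, Monotone f ∧ (∀ j < x.length, ∃ t < xb.length, f t = j) ∧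
      ∀ t < xb.length, xb[t]? = x[f t]? := by
  obtain ⟨ks, hlen, hpos, rfl⟩ := h
  induction x generalizing ks with
  | nil => exact ⟨id, monotone_id, by simp, by simp⟩
  | cons c x ih =>
    obtain _ | ⟨n, ks⟩ := ks
    · simp at hlen
    obtain ⟨f, hf_mono, hf_surj, hf_val⟩ :=
      ih ks (by simpa using hlen) fun k hk => hpos k (mem_cons_of_mem n hk)
    have hn : 0 < n := hpos n mem_cons_self
    refine ⟨fun t => if t < n then 0 else f (t - n) + 1, ?_, ?_, ?_⟩
    · intro s t hst
      dsimp only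
      split_ifs with hs ht ht
      · rfl
      · omega
      · omega
      · exact Nat.succ_le_succ (hf_mono (Nat.sub_le_sub_right hst n))
    · rintro (_ | j) hj
      · exact ⟨0, by simp [hn], if_pos hn⟩
      · obtain ⟨t, ht, rfl⟩ := hf_surj j (by simpa using hj)
        exact ⟨n + t, by simpa using ht, by simp⟩
    · intro t ht
      simp only [zipWith_cons_cons, flatten_cons] at ht ⊢
      split_ifs with htn
      · rw [getElem?_append_left (by simpa using htn)]
        simp [htn]
      · rw [getElem?_append_right (by rw [length_replicate]; omega), length_replicate]
        simpa using hf_val (t - n) (by rw [length_append, length_replicate] at ht; omega)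

theorem exists_isCorrespondence {x y : List α} (hx : x ≠ []) (hy : y ≠ []) :
    ∃ xb yb, IsCorrespondence x y xb yb := by
  have hlen : ∀ (l : List α) (n : ℕ),
      (zipWith (fun a k => replicate k a) l (replicate l.length n)).flatten.length
        = l.length * n := by
    intro l n
    induction l with
    | nil => simp
    | cons c l ih => simp [replicate_succ, ih, Nat.succ_mul, Nat.add_comm]
  refine ⟨_, _, ⟨⟨replicate x.length y.length, by simp, fun k hk => ?_, rfl⟩,
    ⟨replicate y.length x.length, by simp, fun k hk => ?_, rfl⟩, by rw [hlen, hlen, Nat.mul_comm]⟩⟩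
  · rw [eq_of_mem_replicate hk]; exact length_pos_of_ne_nil hy
  · rw [eq_of_mem_replicate hk]; exact length_pos_of_ne_nil hx

theorem dtw_nonneg {δ : α → α → ℝ} (hδ : ∀ p q, 0 ≤ δ p q) (x y : List α) :
    0 ≤ dtw δ x y := by
  refine Real.sInf_nonneg ?_
  rintro _ ⟨xb, yb, -, rfl⟩
  exact sum_nonneg fun c hc => by
    obtain ⟨i, hi, rfl⟩ := (mem_iff_getElem).mp hc
    simp only [getElem_zipWith]
    exact hδ _ _

theorem le_dtw {δ : α → α → ℝ} {x y : List α} {c : ℝ} (hx : x ≠ []) (hy : y ≠ [])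
    (h : ∀ xb yb, IsCorrespondence x y xb yb → c ≤ corrCost δ xb yb) : c ≤ dtw δ x y := by
  obtain ⟨xb, yb, hc⟩ := exists_isCorrespondence hx hy
  refine le_csInf ⟨_, xb, yb, hc, rfl⟩ ?_
  rintro _ ⟨xb, yb, hc, rfl⟩
  exact h xb yb hc

theorem exists_aligned_of_corrCost_lt [DecidableEq α] {δ : α → α → ℝ}
    (hδ : ∀ p q, hamDist p q ≤ δ p q) {x xb yb : List α} (hlen : xb.length = yb.length)
    {f : ℕ → ℕ} (hf_surj : ∀ j < x.length, ∃ t < xb.length, f t = j)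
    (hf_val : ∀ t < xb.length, xb[t]? = x[f t]?) {E : Finset ℕ} {v : α}
    (hE : ∀ p ∈ E, x[p]? = some v) (hcost : corrCost δ xb yb < E.card) :
    ∃ t < xb.length, f t ∈ E ∧ yb[t]? = some v := by
  by_contra! hno
  set T := (Finset.range xb.length).filter fun t => f t ∈ E
  have hET : E.card ≤ T.card := by
    refine Finset.card_le_card_of_surjOn f fun p hp => ?_
    obtain ⟨t, ht, rfl⟩ := hf_surj p (List.getElem?_eq_some_iff.mp (hE p hp)).1
    exact ⟨t, Finset.mem_filter.mpr ⟨Finset.mem_range.mpr ht, hp⟩, rfl⟩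
  have hterm : ∀ t < xb.length, ∃ p q, xb[t]? = some p ∧ yb[t]? = some q ∧
      (zipWith δ xb yb).getD t 0 = δ p q := fun t ht =>
    ⟨xb[t], yb[t], by simp, by simp, by simp [getD_eq_getElem?_getD, ht, hlen ▸ ht]⟩
  have hT : ∀ t ∈ T, 1 ≤ (zipWith δ xb yb).getD t 0 := by
    intro t htT
    obtain ⟨ht, hfE⟩ := Finset.mem_filter.mp htT
    obtain ⟨p, q, hp, hq, hpq⟩ := hterm t (Finset.mem_range.mp ht)
    have hpv : p = v := by
      rw [hf_val t (Finset.mem_range.mp ht), hE _ hfE] at hp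
      exact (Option.some_inj.mp hp).symm
    have hne : p ≠ q := by
      rintro rfl
      exact hno t (Finset.mem_range.mp ht) hfE (hpv ▸ hq)
    rw [hpq]
    simpa [hamDist, hne] using hδ p q
  have hnonneg : ∀ t ∈ Finset.range xb.length, 0 ≤ (zipWith δ xb yb).getD t 0 := by
    intro t ht
    obtain ⟨p, q, -, -, hpq⟩ := hterm t (Finset.mem_range.mp ht)
    rw [hpq]
    exact (by unfold hamDist; positivity : (0 : ℝ) ≤ hamDist p q).trans (hδ p q)
  have : (T.card : ℝ) ≤ corrCost δ xb yb := calc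
    (T.card : ℝ) = ∑ _t ∈ T, (1 : ℝ) := by simp
    _ ≤ ∑ t ∈ T, (zipWith δ xb yb).getD t 0 := Finset.sum_le_sum hT
    _ ≤ ∑ t ∈ Finset.range xb.length, (zipWith δ xb yb).getD t 0 :=
      Finset.sum_le_sum_of_subset_of_nonneg (Finset.filter_subset _ _) fun t ht _ => hnonneg t ht
    _ = corrCost δ xb yb := by rw [corrCost, sum_eq_sum_range_getD, length_zipWith, hlen, min_self]
  have : (E.card : ℝ) ≤ T.card := by exact_mod_cast hET
  linarith

theorem sublist_of_corrCost_lt [DecidableEq α] {δ : α → α → ℝ}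
    (hδ : ∀ p q, hamDist p q ≤ δ p q) {x y xb yb l : List α} {a : ℕ}
    (hc : IsCorrespondence x y xb yb) (hl : l.IsChain (· ≠ ·))
    (hla : l.flatMap (replicate a) <+ x) (hcost : corrCost δ xb yb < a) : l <+ y := by
  obtain ⟨hx, hy, hlen⟩ := hc
  obtain ⟨f, hf_mono, hf_surj, hf_val⟩ := hx.exists_monotone_index
  obtain ⟨g, hg_mono, -, hg_val⟩ := hy.exists_monotone_index
  obtain ⟨e, he⟩ := sublist_iff_exists_orderEmbedding_getElem?_eq.mp hla
  -- the positions in `x` of the `j`-th run `l[j] ^ a`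
  let E : ℕ → Finset ℕ := fun j => (Finset.range a).image fun u => e (j * a + u)
  have hE_card : ∀ j, (E j).card = a := fun j =>
    (Finset.card_image_of_injective _ (e.injective.comp (add_right_injective _))).trans
      (Finset.card_range a)
  have hE_val : ∀ (j : ℕ) (hj : j < l.length), ∀ p ∈ E j, x[p]? = some l[j] := by
    intro j hj p hp
    obtain ⟨u, hu, rfl⟩ := Finset.mem_image.mp hp
    rw [← he, getElem?_flatMap_replicate l a (Finset.mem_range.mp hu), getElem?_eq_getElem hj]
  have hE_lt : ∀ j j', j < j' → ∀ p ∈ E j, ∀ p' ∈ E j', p < p' := by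
    intro j j' hjj' p hp p' hp'
    obtain ⟨u, hu, rfl⟩ := Finset.mem_image.mp hp
    obtain ⟨u', -, rfl⟩ := Finset.mem_image.mp hp'
    refine e.strictMono (lt_of_lt_of_le (?_ : j * a + u < (j + 1) * a) ?_)
    · rw [Nat.succ_mul]; exact Nat.add_lt_add_left (Finset.mem_range.mp hu) _
    · exact (Nat.mul_le_mul_right a hjj').trans (Nat.le_add_right _ _)
  have hmatch : ∀ j : Fin l.length, ∃ t < xb.length, f t ∈ E j ∧ yb[t]? = some l[j] :=
    fun j => exists_aligned_of_corrCost_lt hδ hlen hf_surj hf_val (hE_val j j.2)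
      (by rwa [hE_card])
  choose τ hτ_lt hτ_E hτ_val using hmatch
  have hτ_y : ∀ j, y[g (τ j)]? = some l[j] := fun j =>
    (hg_val _ (hlen ▸ hτ_lt j)).symm.trans (hτ_val j)
  have hτ_mono : ∀ j j', j ≤ j' → g (τ j) ≤ g (τ j') := by
    intro j j' hjj'
    rcases hjj'.lt_or_eq with hjj' | rfl
    · refine hg_mono (le_of_lt ?_)
      by_contra! hle
      exact absurd (hE_lt j j' hjj' _ (hτ_E j) _ (hτ_E j')) (not_lt.mpr (hf_mono hle))
    · rfl
  have hτ_strict : StrictMono fun j => g (τ j) := by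
    intro j j' hjj'
    let j₁ : Fin l.length := ⟨j + 1, lt_of_le_of_lt hjj' j'.2⟩
    have hne : g (τ j) ≠ g (τ j₁) := fun heq => by
      have := (hτ_y j).symm.trans (heq ▸ hτ_y j₁)
      exact isChain_iff_getElem.mp hl j j₁.2 (Option.some_inj.mp this)
    exact lt_of_lt_of_le (lt_of_le_of_ne (hτ_mono j j₁ (Nat.le_succ _)) hne)
      (hτ_mono j₁ j' hjj')
  exact sublist_iff_exists_fin_orderEmbedding_get_eq.mpr
    ⟨OrderEmbedding.ofStrictMono (fun j => ⟨g (τ j), (List.getElem?_eq_some_iff.mp (hτ_y j)).1⟩)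
      fun j j' h => hτ_strict h, fun j => ((List.getElem?_eq_some_iff.mp (hτ_y j)).2).symm⟩

end DTW

theorem hamDist_le_dist_int (p q : ℤ) : hamDist p q ≤ dist p q := by
  unfold hamDist
  split_ifs with h
  · exact dist_nonneg
  · rw [Int.dist_eq]
    exact_mod_cast Int.one_le_abs (sub_ne_zero.mpr h)

-- The letters of the long runs `0 ^ α`, `c ^ α`, `m ^ α` of the blocks `Z(c)`, in order.
def runWord (m : ℕ) (cs : List ℤ) : List ℤ :=
  cs.flatMap fun c => [0, c, (m : ℤ)]

theorem runWord_cons (m : ℕ) (c : ℤ) (cs : List ℤ) :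
    runWord m (c :: cs) = 0 :: c :: (m : ℤ) :: runWord m cs := rfl

theorem runWord_append (m : ℕ) (cs cs' : List ℤ) :
    runWord m (cs ++ cs') = runWord m cs ++ runWord m cs' := flatMap_append

theorem isChain_runWord {m : ℕ} {cs : List ℤ} (hcs : ∀ c ∈ cs, 1 ≤ c ∧ c ≤ (m : ℤ) - 1) :
    (runWord m cs).IsChain (· ≠ ·) := by
  induction cs with
  | nil => exact .nil
  | cons c cs ih =>
    obtain ⟨hc1, hcm⟩ := hcs c mem_cons_self
    rw [runWord_cons, isChain_cons_cons, isChain_cons_cons, isChain_cons]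
    refine ⟨by omega, by omega, fun z hz => ?_, ih fun c' hc' => hcs c' (mem_cons_of_mem c hc')⟩
    obtain _ | ⟨c', cs⟩ := cs
    · simp [runWord] at hz
    · obtain rfl := Option.some_inj.mp hz
      omega

theorem flatMap_replicate_runWord_sublist (m a : ℕ) (cs : List ℤ) :
    (runWord m cs).flatMap (replicate a) <+ cs.flatMap (Zint m a) := by
  induction cs with
  | nil => exact .slnil
  | cons c cs ih =>
    have hZ : replicate a 0 ++ (replicate a c ++ replicate a (m : ℤ)) <+ Zint m a c := by
      simp [Zint]
    simpa only [runWord_cons, flatMap_cons, append_assoc] using hZ.append ih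

theorem Aint_eq_flatMap (m a k : ℕ) (x : Fin k → ℤ) :
    Aint m a k x = (ofFn x).flatMap (Zint m a) := by
  simp [Aint, flatMap, map_ofFn, Function.comp_def]

theorem fullBlock_eq (m : ℕ) : fullBlock m = (List.range (m + 1)).map (↑) := by
  simp only [fullBlock, pure_def, bind_eq_flatMap, ← map_eq_flatMap, map_id']

theorem pairwise_lt_fullBlock (m : ℕ) : (fullBlock m).Pairwise (· < ·) := by
  simpa [fullBlock_eq, pairwise_map] using pairwise_lt_range

theorem le_of_mem_fullBlock {m : ℕ} {z : ℤ} (hz : z ∈ fullBlock m) : z ≤ m := by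
  obtain ⟨t, ht, rfl⟩ := mem_map.mp (fullBlock_eq m ▸ hz)
  have := mem_range.mp ht
  omega

theorem Yint_eq (m : ℕ) (y : ℤ) : Yint m y = ((List.range (m + 1)).map (↑)).filter (· != y) := by
  simp only [Yint, pure_def, bind_eq_flatMap, ← map_eq_flatMap, map_id']

theorem notMem_Yint (m : ℕ) (y : ℤ) : y ∉ Yint m y := by simp [Yint_eq]

theorem zero_mem_Yint (m : ℕ) {y : ℤ} (hy : y ≠ 0) : 0 ∈ Yint m y := by simp [Yint_eq, hy.symm]

theorem sublist_of_runWord_append_sublist_fullBlocks {m : ℕ} {cs r L : List ℤ}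
    (h : runWord m cs ++ r <+ (replicate cs.length (fullBlock m)).flatten ++ L) : r <+ L := by
  induction cs with
  | nil => simpa [runWord] using h
  | cons c cs ih =>
    rw [runWord_cons, length_cons, replicate_succ, flatten_cons, append_assoc] at h
    exact ih (sublist_of_append_cons_sublist_append (u := [0, c]) (pairwise_lt_fullBlock m)
      (fun _ => le_of_mem_fullBlock) h)

theorem not_cons_cons_runWord_sublist_fullBlocks (m : ℕ) (c : ℤ) (cs : List ℤ) :
    ¬ c :: (m : ℤ) :: runWord m cs <+ (replicate cs.length (fullBlock m)).flatten := by
  induction cs generalizing c with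
  | nil => simp
  | cons c' cs ih =>
    intro h
    rw [runWord_cons, length_cons, replicate_succ, flatten_cons] at h
    exact ih c' (sublist_of_cons_sublist (sublist_of_append_cons_sublist_append (u := [c])
      (pairwise_lt_fullBlock m) (fun _ => le_of_mem_fullBlock) h))

theorem runWord_not_sublist_Bint {m k : ℕ} {x : Fin k → ℤ} {i : Fin k} {y : ℤ} (h : x i = y) :
    ¬ runWord m (ofFn x) <+ Bint m k i y := by
  set pre := (ofFn x).take i
  set suf := (ofFn x).drop (i + 1)
  have hsplit : ofFn x = pre ++ y :: suf := by
    rw [← take_append_drop i (ofFn x), drop_eq_getElem_cons (by simp), ← h, List.getElem_ofFn]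
  have hpre : pre.length = i := by simp [pre]
  have hsuf : suf.length = k - 1 - i := by
    rw [length_drop, length_ofFn]; omega
  intro hsub
  rw [hsplit, runWord_append, runWord_cons, Bint, ← hsuf, ← hpre, append_assoc] at hsub
  have hY := cons_sublist_of_append_cons_sublist_append (u := [0]) (notMem_Yint m y)
    (sublist_of_runWord_append_sublist_fullBlocks hsub)
  exact not_cons_cons_runWord_sublist_fullBlocks m y suf hY

theorem Aint_ne_nil (m : ℕ) {a k : ℕ} (ha : 0 < a) (x : Fin k → ℤ) (i : Fin k) :
    Aint m a k x ≠ [] := by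
  rw [Aint_eq_flatMap]
  refine ne_nil_of_mem (a := 0) (mem_flatMap.mpr ⟨x i, by simp, ?_⟩)
  simp [Zint, ha.ne']

theorem Bint_ne_nil (m : ℕ) {k : ℕ} (i : Fin k) {y : ℤ} (hy : y ≠ 0) : Bint m k i y ≠ [] :=
  ne_nil_of_mem (mem_append_left _ (mem_append_right _ (zero_mem_Yint m hy)))

theorem dtw_int_index_eq_general (m a k : ℕ) (x : Fin k → ℤ) (hx : ∀ j, 1 ≤ x j ∧ x j ≤ (m : ℤ) - 1)
    (i : Fin k) (yv : ℤ) (h : x i = yv) :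
    (a : ℝ) ≤ dtw dist (Aint m a k x) (Bint m k i yv) := by
  obtain rfl | ha := Nat.eq_zero_or_pos a
  · exact_mod_cast dtw_nonneg (fun _ _ => dist_nonneg) _ _
  have hy : yv ≠ 0 := by have := hx i; omega
  refine le_dtw (Aint_ne_nil m ha x i) (Bint_ne_nil m i hy) fun xb yb hc =>
    not_lt.mp fun hlt => ?_
  have hchain : (runWord m (ofFn x)).IsChain (· ≠ ·) :=
    isChain_runWord (by simpa [mem_ofFn] using hx)
  have hruns := flatMap_replicate_runWord_sublist m a (ofFn x)
  rw [← Aint_eq_flatMap] at hruns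
  exact runWord_not_sublist_Bint h (sublist_of_corrCost_lt hamDist_le_dist_int hc hchain hruns hlt)

/-- If x_i = y_i then dtw(A(x), B(i)) ≥ α. -/
theorem dtw_int_index_eq (m a k : ℕ) (hm : 2 ≤ m) (hma : m ≤ a) (hk : 0 < k)
    (x : Fin k → ℤ) (hx : ∀ j, 1 ≤ x j ∧ x j ≤ (m : ℤ) - 1)
    (i : Fin k) (yv : ℤ) (hyv : 1 ≤ yv ∧ yv ≤ (m : ℤ) - 1)
    (h : x i = yv) :
    (a : ℝ) ≤ dtw dist (Aint m a k x) (Bint m k i yv) :=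
  dtw_int_index_eq_general m a k x hx i yv h
end
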